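/- arXiv:2410.10193 — 2 statements merged into one kernel-verified Lean document; each statement's English description precedes it below -/
import Mathlib

section
/- Let θ ∈ (0,π)³ with θ₁ ≤ θ₂ ≤ θ₃, θ₁+θ₂+θ₃ ∈ πℤ, and all θⱼ pairwise distinct. Then the stabilizer in SU(3) of the ordered pair (V₀, V_θ) is exactly the group of diagonal matrices diag(ε₁,ε₂,ε₃) with εⱼ ∈ {±1} and ε₁ε₂ε₃ = 1, which is isomorphic to ℤ/2 × ℤ/2. -/
open scoped Real ComplexConjugate
open Finset

/-- The standard real subspace `V₀ = ℝⁿ ⊂ ℂⁿ`, the real span of the standard basis. -/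
noncomputable def V0 (n : ℕ) : Submodule ℝ (Fin n → ℂ) :=
  Submodule.span ℝ (Set.range fun j => (Pi.single j 1 : Fin n → ℂ))

/-- The plane `V_θ = {(e^{iθ₁}x₁, …, e^{iθₙ}xₙ) : xⱼ ∈ ℝ}`, i.e. the real span of the vectors
`e^{iθⱼ} eⱼ`. -/
noncomputable def Vtheta (n : ℕ) (θ : Fin n → ℝ) : Submodule ℝ (Fin n → ℂ) :=
  Submodule.span ℝ (Set.range fun j => (Pi.single j (Complex.exp (θ j * Complex.I)) : Fin n → ℂ))

/-- The standard symplectic form `ω₀ = Im h` on `ℂⁿ`, `h` being the standard Hermitian metric. -/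
noncomputable def omega0 {n : ℕ} (z w : Fin n → ℂ) : ℝ :=
  (∑ j, conj (z j) * w j).im

/-- `ω₀` vanishes identically on `V`. -/
def OmegaVanishes {n : ℕ} (V : Submodule ℝ (Fin n → ℂ)) : Prop :=
  ∀ v ∈ V, ∀ w ∈ V, omega0 v w = 0

/-- `Im Ω₀` vanishes identically on `V`, where `Ω₀ = dz₁ ∧ ⋯ ∧ dzₙ` is the standard holomorphic
volume form: for any `n` vectors of `V` the determinant they span has vanishing imaginary part. -/
def ImVolVanishes {n : ℕ} (V : Submodule ℝ (Fin n → ℂ)) : Prop :=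
  ∀ b : Fin n → (Fin n → ℂ), (∀ i, b i ∈ V) → ((Matrix.of fun i j => b i j).det).im = 0

/-- A real `n`-dimensional subspace of `ℂⁿ` is special Lagrangian if `ω₀` and `Im Ω₀` vanish
identically on it. -/
def IsSpecialLagrangian (n : ℕ) (V : Submodule ℝ (Fin n → ℂ)) : Prop :=
  Module.finrank ℝ V = n ∧ OmegaVanishes V ∧ ImVolVanishes V

/-- The action of a complex `n×n` matrix on `ℂⁿ`, as a real-linear map. -/
noncomputable def actL {n : ℕ} (M : Matrix (Fin n) (Fin n) ℂ) :
    (Fin n → ℂ) →ₗ[ℝ] (Fin n → ℂ) :=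
  (Matrix.mulVecLin M).restrictScalars ℝ

lemma actL_mul {n : ℕ} (M N : Matrix (Fin n) (Fin n) ℂ) :
    actL (M * N) = (actL M).comp (actL N) := by
  ext v
  simp [actL, Matrix.mulVecLin_mul]

lemma actL_one {n : ℕ} : actL (1 : Matrix (Fin n) (Fin n) ℂ) = LinearMap.id := by
  ext v
  simp [actL]

/-- The stabilizer in `SU(3)` of the ordered pair of subspaces `(V₀, V_θ)`, realized as a
subgroup of the unitary group `U(3)` (its elements have determinant one, i.e. lie in `SU(3)`). -/
noncomputable def stabSU (θ : Fin 3 → ℝ) : Subgroup (Matrix.unitaryGroup (Fin 3) ℂ) where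
  carrier := {B | (B : Matrix (Fin 3) (Fin 3) ℂ).det = 1 ∧
    Submodule.map (actL (B : Matrix (Fin 3) (Fin 3) ℂ)) (V0 3) = V0 3 ∧
    Submodule.map (actL (B : Matrix (Fin 3) (Fin 3) ℂ)) (Vtheta 3 θ) = Vtheta 3 θ}
  one_mem' := by
    refine ⟨by simp, ?_, ?_⟩ <;>
      simp [actL_one, Submodule.map_id, OneMemClass.coe_one]
  mul_mem' := by
    rintro a b ⟨ha1, ha2, ha3⟩ ⟨hb1, hb2, hb3⟩
    refine ⟨by simp [MulMemClass.coe_mul, Matrix.det_mul, ha1, hb1], ?_, ?_⟩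
    · rw [MulMemClass.coe_mul, actL_mul, Submodule.map_comp, hb2, ha2]
    · rw [MulMemClass.coe_mul, actL_mul, Submodule.map_comp, hb3, ha3]
  inv_mem' := by
    rintro a ⟨ha1, ha2, ha3⟩
    have hinv : ((a⁻¹ : Matrix.unitaryGroup (Fin 3) ℂ) : Matrix (Fin 3) (Fin 3) ℂ) *
        (a : Matrix (Fin 3) (Fin 3) ℂ) = 1 := by
      rw [← MulMemClass.coe_mul, inv_mul_cancel, OneMemClass.coe_one]
    have hdet : ((a⁻¹ : Matrix.unitaryGroup (Fin 3) ℂ) : Matrix (Fin 3) (Fin 3) ℂ).det = 1 := by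
      have := congrArg Matrix.det hinv
      rw [Matrix.det_mul, ha1, mul_one, Matrix.det_one] at this
      exact this
    refine ⟨hdet, ?_, ?_⟩
    · conv_lhs => rw [← ha2]
      rw [← Submodule.map_comp, ← actL_mul, hinv, actL_one, Submodule.map_id]
    · conv_lhs => rw [← ha3]
      rw [← Submodule.map_comp, ← actL_mul, hinv, actL_one, Submodule.map_id]

/-- `SO(3)` as the subgroup of the orthogonal group `O(3)` of matrices of determinant one. -/
noncomputable def SO3 : Subgroup (Matrix.orthogonalGroup (Fin 3) ℝ) where
  carrier := {A | (A : Matrix (Fin 3) (Fin 3) ℝ).det = 1}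
  one_mem' := by simp
  mul_mem' := by
    intro a b ha hb
    simp only [Set.mem_setOf_eq, MulMemClass.coe_mul, Matrix.det_mul] at *
    rw [ha, hb, mul_one]
  inv_mem' := by
    intro a ha
    have hinv : ((a⁻¹ : Matrix.orthogonalGroup (Fin 3) ℝ) : Matrix (Fin 3) (Fin 3) ℝ) *
        (a : Matrix (Fin 3) (Fin 3) ℝ) = 1 := by
      rw [← MulMemClass.coe_mul, inv_mul_cancel, OneMemClass.coe_one]
    have := congrArg Matrix.det hinv
    simp only [Set.mem_setOf_eq] at *
    rw [Matrix.det_mul, ha, mul_one, Matrix.det_one] at this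
    exact this

/-!
A matrix preserving `V₀ = ℝ³` has real entries `bᵢⱼ`. If it also preserves `V_θ`, the image of
`e^{iθⱼ}eⱼ` lies in `V_θ`, so `bᵢⱼ e^{iθⱼ} ∈ ℝ e^{iθᵢ}`, i.e. `bᵢⱼ sin (θⱼ - θᵢ) = 0`; as the `θⱼ`
are distinct points of `(0, π)`, the sines do not vanish and the matrix is diagonal. A real
diagonal unitary matrix has entries `±1`, and `det = 1` makes their product `1`. Conversely such a
matrix rescales each spanning vector of `V₀` and of `V_θ` by `±1`. The resulting group consists of
the matrices `diag (s, t, st)` with `s, t ∈ ℤˣ`.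
-/

open Matrix

section SpanSingle

variable {n : ℕ}

theorem mem_span_range_single_iff (c v : Fin n → ℂ) :
    v ∈ Submodule.span ℝ (Set.range fun j => (Pi.single j (c j) : Fin n → ℂ)) ↔
      ∃ r : Fin n → ℝ, ∀ j, v j = r j * c j := by
  rw [Submodule.mem_span_range_iff_exists_fun]
  refine exists_congr fun r => ?_
  rw [eq_comm, funext_iff]
  refine forall_congr' fun j => ?_
  simp [Finset.sum_apply, Pi.single_apply, Complex.real_smul]

theorem exists_entry_mul_eq_of_map_le {M : Matrix (Fin n) (Fin n) ℂ} {c : Fin n → ℂ}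
    (h : (Submodule.span ℝ (Set.range fun j => (Pi.single j (c j) : Fin n → ℂ))).map (actL M) ≤
      Submodule.span ℝ (Set.range fun j => (Pi.single j (c j) : Fin n → ℂ))) (i j : Fin n) :
    ∃ r : ℝ, M i j * c j = r * c i := by
  have hcol := h (Submodule.mem_map_of_mem (Submodule.subset_span ⟨j, rfl⟩))
  obtain ⟨r, hr⟩ := (mem_span_range_single_iff c _).1 hcol
  exact ⟨r i, by simpa [actL, mul_comm] using hr i⟩

theorem map_actL_diagonal_span_single {ε : Fin n → ℝ} (hε : ∀ j, ε j ≠ 0) (c : Fin n → ℂ) :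
    (Submodule.span ℝ (Set.range fun j => (Pi.single j (c j) : Fin n → ℂ))).map
        (actL (diagonal fun j => (ε j : ℂ))) =
      Submodule.span ℝ (Set.range fun j => (Pi.single j (c j) : Fin n → ℂ)) := by
  rw [Submodule.map_span, ← Set.range_comp]
  ext v
  simp only [Function.comp_def, actL, LinearMap.restrictScalars_apply, mulVecLin_apply,
    diagonal_mulVec_single, mem_span_range_single_iff]
  constructor
  · rintro ⟨r, hr⟩
    exact ⟨fun j => r j * ε j, fun j => by rw [hr j]; push_cast; ring⟩
  · rintro ⟨r, hr⟩
    exact ⟨fun j => r j / ε j, fun j => by rw [hr j]; push_cast; field_simp [hε j]⟩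

end SpanSingle

theorem eq_zero_of_ofReal_mul_exp_eq {a s x y : ℝ} (hxy : Real.sin (x - y) ≠ 0)
    (h : (a : ℂ) * Complex.exp (x * Complex.I) = s * Complex.exp (y * Complex.I)) : a = 0 := by
  have hrot : (a : ℂ) * Complex.exp ((x - y : ℝ) * Complex.I) = s := by
    rw [Complex.ofReal_sub, sub_mul, Complex.exp_sub, ← mul_div_assoc, h,
      mul_div_cancel_right₀ _ (Complex.exp_ne_zero _)]
  have him := congrArg Complex.im hrot
  rw [Complex.im_ofReal_mul, Complex.exp_ofReal_mul_I_im, Complex.ofReal_im] at him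
  exact (mul_eq_zero.1 him).resolve_right hxy

theorem eq_diagonal_of_map_le {n : ℕ} {θ : Fin n → ℝ}
    (hθ : ∀ i j, i ≠ j → Real.sin (θ j - θ i) ≠ 0) {M : Matrix (Fin n) (Fin n) ℂ}
    (h0 : (V0 n).map (actL M) ≤ V0 n) (hθM : (Vtheta n θ).map (actL M) ≤ Vtheta n θ) :
    ∃ a : Fin n → ℝ, M = diagonal fun j => (a j : ℂ) := by
  have hreal : ∀ i j, ∃ r : ℝ, M i j = r := fun i j => by
    simpa using exists_entry_mul_eq_of_map_le (c := fun _ => 1) h0 i j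
  choose a ha using hreal
  refine ⟨fun j => a j j, ext fun i j => ?_⟩
  rcases eq_or_ne i j with rfl | hij
  · simp [ha]
  · obtain ⟨s, hs⟩ := exists_entry_mul_eq_of_map_le hθM i j
    rw [ha] at hs
    simp [diagonal_apply_ne _ hij, ha, eq_zero_of_ofReal_mul_exp_eq (hθ i j hij) hs]

theorem diagonal_ofReal_mem_unitaryGroup_iff {n : ℕ} (a : Fin n → ℝ) :
    (diagonal fun j => (a j : ℂ)) ∈ unitaryGroup (Fin n) ℂ ↔ ∀ j, a j = 1 ∨ a j = -1 := by
  rw [mem_unitaryGroup_iff, star_eq_conjTranspose, diagonal_conjTranspose,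
    diagonal_mul_diagonal, ← diagonal_one, diagonal_eq_diagonal_iff]
  refine forall_congr' fun j => ?_
  rw [← mul_self_eq_one_iff]
  simp only [Pi.star_apply, Complex.star_def, Complex.conj_ofReal]
  exact_mod_cast Iff.rfl

theorem sin_sub_ne_zero_of_mem_Ioo {x y : ℝ} (hx : x ∈ Set.Ioo 0 π) (hy : y ∈ Set.Ioo 0 π)
    (hxy : x ≠ y) : Real.sin (x - y) ≠ 0 := by
  rw [Ne, Real.sin_eq_zero_iff_of_lt_of_lt (by linarith [hx.1, hy.2]) (by linarith [hx.2, hy.1]),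
    sub_eq_zero]
  exact hxy

theorem mem_stabSU_iff {θ : Fin 3 → ℝ} (hθ : ∀ i j, i ≠ j → Real.sin (θ j - θ i) ≠ 0)
    (B : unitaryGroup (Fin 3) ℂ) :
    B ∈ stabSU θ ↔ ∃ ε : Fin 3 → ℝ, (∀ j, ε j = 1 ∨ ε j = -1) ∧ ε 0 * ε 1 * ε 2 = 1 ∧
      (B : Matrix (Fin 3) (Fin 3) ℂ) = diagonal fun j => (ε j : ℂ) := by
  constructor
  · rintro ⟨hdet, h0, hθB⟩
    obtain ⟨a, ha⟩ := eq_diagonal_of_map_le hθ h0.le hθB.le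
    have hunit := B.2
    rw [ha, diagonal_ofReal_mem_unitaryGroup_iff] at hunit
    rw [ha, det_diagonal, Fin.prod_univ_three] at hdet
    exact ⟨a, hunit, by exact_mod_cast hdet, ha⟩
  · rintro ⟨ε, hε, hprod, hB⟩
    have hε0 : ∀ j, ε j ≠ 0 := fun j => by rcases hε j with h | h <;> simp [h]
    refine ⟨?_, ?_, ?_⟩
    · rw [hB, det_diagonal, Fin.prod_univ_three]
      exact_mod_cast hprod
    · rw [hB]
      exact map_actL_diagonal_span_single hε0 fun _ => 1
    · rw [hB]
      exact map_actL_diagonal_span_single hε0 _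

theorem exists_int_units_cast_eq_iff {x : ℝ} : (∃ u : ℤˣ, ((u : ℤ) : ℝ) = x) ↔ x = 1 ∨ x = -1 := by
  constructor
  · rintro ⟨u, rfl⟩
    rcases Int.units_eq_one_or u with rfl | rfl <;> simp
  · rintro (rfl | rfl)
    exacts [⟨1, by simp⟩, ⟨-1, by simp⟩]

def kleinSigns (p : ℤˣ × ℤˣ) : Fin 3 → ℝ :=
  ![((p.1 : ℤ) : ℝ), ((p.2 : ℤ) : ℝ), (((p.1 * p.2 : ℤˣ) : ℤ) : ℝ)]

theorem kleinSigns_eq_one_or (p : ℤˣ × ℤˣ) (j : Fin 3) :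
    kleinSigns p j = 1 ∨ kleinSigns p j = -1 := by
  fin_cases j <;> exact exists_int_units_cast_eq_iff.1 ⟨_, rfl⟩

theorem kleinSigns_prod (p : ℤˣ × ℤˣ) : kleinSigns p 0 * kleinSigns p 1 * kleinSigns p 2 = 1 := by
  rcases Int.units_eq_one_or p.1 with h1 | h1 <;> rcases Int.units_eq_one_or p.2 with h2 | h2 <;>
    simp [kleinSigns, h1, h2]

theorem kleinSigns_mul (p q : ℤˣ × ℤˣ) : kleinSigns (p * q) = kleinSigns p * kleinSigns q := by
  funext j
  fin_cases j <;> simp [kleinSigns, mul_mul_mul_comm]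

theorem kleinSigns_injective : Function.Injective kleinSigns := by
  intro p q h
  have h0 := congrFun h 0
  have h1 := congrFun h 1
  simp only [kleinSigns, Matrix.cons_val_zero, Matrix.cons_val_one, Int.cast_inj,
    Units.val_inj] at h0 h1
  exact Prod.ext h0 h1

theorem exists_kleinSigns_eq {ε : Fin 3 → ℝ} (hε : ∀ j, ε j = 1 ∨ ε j = -1)
    (hprod : ε 0 * ε 1 * ε 2 = 1) : ∃ p, kleinSigns p = ε := by
  obtain ⟨s, hs⟩ := exists_int_units_cast_eq_iff.2 (hε 0)
  obtain ⟨t, ht⟩ := exists_int_units_cast_eq_iff.2 (hε 1)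
  have h2 : ε 2 = ε 0 * ε 1 := by
    rcases hε 2 with h | h <;> rw [h] at hprod ⊢ <;> linarith
  refine ⟨(s, t), funext fun j => ?_⟩
  fin_cases j <;> simp [kleinSigns, hs, ht, h2]

def signDiag : ℤˣ × ℤˣ →* unitaryGroup (Fin 3) ℂ where
  toFun p := ⟨diagonal fun j => (kleinSigns p j : ℂ),
    (diagonal_ofReal_mem_unitaryGroup_iff _).2 (kleinSigns_eq_one_or p)⟩
  map_one' := Subtype.ext <| by
    change diagonal _ = 1
    rw [← diagonal_one]
    congr 1
    funext j
    fin_cases j <;> simp [kleinSigns]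
  map_mul' p q := Subtype.ext <| by
    simp [kleinSigns_mul, diagonal_mul_diagonal]

theorem signDiag_injective : Function.Injective signDiag := by
  intro p q h
  have hdiag := congrArg Subtype.val h
  simp only [signDiag, MonoidHom.coe_mk, OneHom.coe_mk, diagonal_eq_diagonal_iff,
    Complex.ofReal_inj] at hdiag
  exact kleinSigns_injective (funext hdiag)

theorem range_signDiag {θ : Fin 3 → ℝ} (hθ : ∀ i j, i ≠ j → Real.sin (θ j - θ i) ≠ 0) :
    signDiag.range = stabSU θ := by
  ext B
  rw [mem_stabSU_iff hθ, MonoidHom.mem_range]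
  constructor
  · rintro ⟨p, rfl⟩
    exact ⟨kleinSigns p, kleinSigns_eq_one_or p, kleinSigns_prod p, rfl⟩
  · rintro ⟨ε, hε, hprod, hB⟩
    obtain ⟨p, rfl⟩ := exists_kleinSigns_eq hε hprod
    exact ⟨p, Subtype.ext hB.symm⟩

noncomputable def intUnitsProdEquiv : Multiplicative (ZMod 2 × ZMod 2) ≃* ℤˣ × ℤˣ :=
  have hZ : Nat.card (Multiplicative (ZMod 2)) = 2 := by simp
  have hU : Nat.card ℤˣ = 2 := by simp [Nat.card_eq_fintype_card, Fintype.card_units_int]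
  (MulEquiv.prodMultiplicative _ _).trans
    (MulEquiv.prodCongr (mulEquivOfPrimeCardEq hZ hU) (mulEquivOfPrimeCardEq hZ hU))

theorem stabilizer_eq_klein_four_general (θ : Fin 3 → ℝ)
    (hθ : ∀ j, θ j ∈ Set.Ioo (0 : ℝ) π)
    (hdist : θ 0 ≠ θ 1 ∧ θ 1 ≠ θ 2 ∧ θ 0 ≠ θ 2) :
    ((stabSU θ : Set (Matrix.unitaryGroup (Fin 3) ℂ)) =
      {B : Matrix.unitaryGroup (Fin 3) ℂ | ∃ ε : Fin 3 → ℝ, (∀ j, ε j = 1 ∨ ε j = -1) ∧ ε 0 * ε 1 * ε 2 = 1 ∧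
        (B : Matrix (Fin 3) (Fin 3) ℂ) = Matrix.diagonal fun j => (ε j : ℂ)}) ∧
    Nonempty (stabSU θ ≃* Multiplicative (ZMod 2 × ZMod 2)) := by
  have hinj : Function.Injective θ := by
    intro i j
    fin_cases i <;> fin_cases j <;> grind
  have hsin : ∀ i j, i ≠ j → Real.sin (θ j - θ i) ≠ 0 := fun i j hij =>
    sin_sub_ne_zero_of_mem_Ioo (hθ j) (hθ i) (hinj.ne hij.symm)
  exact ⟨Set.ext (mem_stabSU_iff hsin),
    ⟨(MulEquiv.subgroupCongr (range_signDiag hsin)).symm.trans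
      ((MonoidHom.ofInjective signDiag_injective).symm.trans intUnitsProdEquiv.symm)⟩⟩

/-- For nondecreasing `θ ∈ (0,π)³` with `Σθ ∈ πℤ` and pairwise distinct
entries, the stabilizer in `SU(3)` of `(V₀, V_θ)` is exactly the set of diagonal matrices
`diag(ε₁,ε₂,ε₃)` with `εⱼ ∈ {±1}` and `ε₁ε₂ε₃ = 1`, a group isomorphic to `ℤ/2 × ℤ/2`. -/
theorem stabilizer_eq_klein_four (θ : Fin 3 → ℝ)
    (hθ : ∀ j, θ j ∈ Set.Ioo (0 : ℝ) π) (hmono : Monotone θ)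
    (hsum : ∃ k : ℤ, (∑ j, θ j) = k * π)
    (hdist : θ 0 ≠ θ 1 ∧ θ 1 ≠ θ 2 ∧ θ 0 ≠ θ 2) :
    ((stabSU θ : Set (Matrix.unitaryGroup (Fin 3) ℂ)) =
      {B : Matrix.unitaryGroup (Fin 3) ℂ | ∃ ε : Fin 3 → ℝ, (∀ j, ε j = 1 ∨ ε j = -1) ∧ ε 0 * ε 1 * ε 2 = 1 ∧
        (B : Matrix (Fin 3) (Fin 3) ℂ) = Matrix.diagonal fun j => (ε j : ℂ)}) ∧
    Nonempty (stabSU θ ≃* Multiplicative (ZMod 2 × ZMod 2)) :=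
  stabilizer_eq_klein_four_general θ hθ hdist
end

section
/- Let θ ∈ (0,π)³ with θ₁+θ₂+θ₃ ∈ πℤ and exactly two of the angles equal (say θ₁ = θ₂ ≠ θ₃). Then the stabilizer in SU(3) of the ordered pair (V₀, V_θ) is the group {diag(A, det A) : A ∈ O(2)}, which is isomorphic to O(2). -/
open scoped Real ComplexConjugate
open Finset

/-- The block-diagonal matrix `diag(A, det A)` in `SO(3) ⊂ SU(3)`, with the `2×2` block `A`
acting on `span(e₁,e₂)` and `det A` on `e₃`. -/
noncomputable def embedO2 (A : Matrix (Fin 2) (Fin 2) ℝ) : Matrix (Fin 3) (Fin 3) ℂ :=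
  (Matrix.reindex finSumFinEquiv finSumFinEquiv
    (Matrix.fromBlocks A (0 : Matrix (Fin 2) (Fin 1) ℝ) (0 : Matrix (Fin 1) (Fin 2) ℝ) (Matrix.of fun _ _ => A.det))).map (fun x => (x : ℂ))

/-!
For unitary `B`, preserving `V₀ = ℝ³` means that `B` is real. Since `V_θ = D V₀` with
`D = diag(e^{iθⱼ})`, preserving `V_θ` means that `D⁻¹ B D`, with entries `B_jk e^{i(θ_k - θ_j)}`,
is real too, i.e. `B_jk sin(θ_k - θ_j) = 0`. As the angles lie in `(0, π)`, this says `B_jk = 0`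
whenever `θ_j ≠ θ_k`; for `θ₁ = θ₂ ≠ θ₃` this makes `B = diag(A, c)` with `A ∈ O(2)`, `c = ±1`, and
`det B = det A · c = 1` forces `c = det A`.
-/

section

variable {n : ℕ}

lemma V0_eq_range :
    V0 n = LinearMap.range (LinearMap.compLeft Complex.ofRealAm.toLinearMap (Fin n)) := by
  rw [V0, LinearMap.range_eq_map, ← (Pi.basisFun ℝ (Fin n)).span_eq, Submodule.map_span,
    ← Set.range_comp]
  congr 2
  funext j i
  by_cases h : i = j
  · subst h; simp [LinearMap.compLeft]
  · simp [LinearMap.compLeft, h]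

lemma mem_V0_iff {v : Fin n → ℂ} : v ∈ V0 n ↔ ∀ j, (v j).im = 0 := by
  rw [V0_eq_range, LinearMap.mem_range]
  refine ⟨?_, fun h => ⟨fun j => (v j).re, funext fun j => Complex.ext (by simp) (by simp [h])⟩⟩
  rintro ⟨x, rfl⟩ j
  simp [LinearMap.compLeft]

lemma map_actL_V0_le_iff (M : Matrix (Fin n) (Fin n) ℂ) :
    Submodule.map (actL M) (V0 n) ≤ V0 n ↔ ∀ i j, (M i j).im = 0 := by
  rw [Submodule.map_le_iff_le_comap]
  nth_rw 1 [V0]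
  rw [Submodule.span_le, Set.range_subset_iff, forall_comm]
  simp [actL, mem_V0_iff]

lemma actL_injective_of_mul_eq_one {M N : Matrix (Fin n) (Fin n) ℂ} (h : N * M = 1) :
    Function.Injective (actL M) :=
  Function.LeftInverse.injective (g := actL N) fun v => by
    rw [← LinearMap.comp_apply, ← actL_mul, h, actL_one, LinearMap.id_apply]

lemma map_actL_V0_eq_iff {M : Matrix (Fin n) (Fin n) ℂ}
    (hM : M ∈ Matrix.unitaryGroup (Fin n) ℂ) :
    Submodule.map (actL M) (V0 n) = V0 n ↔ ∀ i j, (M i j).im = 0 := by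
  refine ⟨fun h => (map_actL_V0_le_iff M).1 h.le, fun h => ?_⟩
  have hstar : Submodule.map (actL (star M)) (V0 n) ≤ V0 n :=
    (map_actL_V0_le_iff _).2 fun i j => by simp [Matrix.star_apply, h j i]
  refine le_antisymm ((map_actL_V0_le_iff M).2 h) ?_
  calc V0 n = Submodule.map (actL (M * star M)) (V0 n) := by
        rw [Matrix.mem_unitaryGroup_iff.1 hM, actL_one, Submodule.map_id]
    _ = Submodule.map (actL M) (Submodule.map (actL (star M)) (V0 n)) := by
        rw [actL_mul, Submodule.map_comp]
    _ ≤ Submodule.map (actL M) (V0 n) := Submodule.map_mono hstar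

lemma map_actL_map_eq_iff {U : Matrix (Fin n) (Fin n) ℂ}
    (hU : U ∈ Matrix.unitaryGroup (Fin n) ℂ) (M : Matrix (Fin n) (Fin n) ℂ)
    (W : Submodule ℝ (Fin n → ℂ)) :
    Submodule.map (actL M) (Submodule.map (actL U) W) = Submodule.map (actL U) W ↔
      Submodule.map (actL (star U * M * U)) W = W := by
  have hinj := Submodule.map_injective_of_injective
    (actL_injective_of_mul_eq_one (Matrix.mem_unitaryGroup_iff.1 hU))
  rw [← hinj.eq_iff]
  simp only [← Submodule.map_comp, ← actL_mul, ← mul_assoc, Matrix.mem_unitaryGroup_iff'.1 hU,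
    actL_one, Submodule.map_id]

noncomputable def phaseMat (θ : Fin n → ℝ) : Matrix (Fin n) (Fin n) ℂ :=
  Matrix.diagonal fun j => Complex.exp (θ j * Complex.I)

lemma star_phaseMat (θ : Fin n → ℝ) : star (phaseMat θ) = phaseMat (-θ) := by
  rw [phaseMat, phaseMat, Matrix.star_eq_conjTranspose, Matrix.diagonal_conjTranspose]
  congr 1
  funext j
  simp [← Complex.exp_conj]

lemma phaseMat_add (θ φ : Fin n → ℝ) : phaseMat (θ + φ) = phaseMat θ * phaseMat φ := by
  simp [phaseMat, Matrix.diagonal_mul_diagonal, ← Complex.exp_add, add_mul]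

lemma phaseMat_mem_unitaryGroup (θ : Fin n → ℝ) :
    phaseMat θ ∈ Matrix.unitaryGroup (Fin n) ℂ := by
  rw [Matrix.mem_unitaryGroup_iff, star_phaseMat, ← phaseMat_add, add_neg_cancel]
  simp [phaseMat]

lemma Vtheta_eq_map_phaseMat (θ : Fin n → ℝ) :
    Vtheta n θ = Submodule.map (actL (phaseMat θ)) (V0 n) := by
  simp only [Vtheta, V0, Submodule.map_span, ← Set.range_comp]
  congr 2
  funext j
  simp [actL, phaseMat]

lemma conj_phaseMat_apply (θ : Fin n → ℝ) (M : Matrix (Fin n) (Fin n) ℂ) (i j : Fin n) :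
    (star (phaseMat θ) * M * phaseMat θ) i j =
      M i j * Complex.exp ((θ j - θ i : ℝ) * Complex.I) := by
  rw [star_phaseMat, phaseMat, phaseMat, Matrix.mul_diagonal, Matrix.diagonal_mul,
    mul_comm (Complex.exp _), mul_assoc, ← Complex.exp_add, Pi.neg_apply]
  push_cast
  ring_nf

lemma map_actL_Vtheta_eq_iff (θ : Fin n → ℝ) {M : Matrix (Fin n) (Fin n) ℂ}
    (hM : M ∈ Matrix.unitaryGroup (Fin n) ℂ) (hreal : ∀ i j, (M i j).im = 0) :
    Submodule.map (actL M) (Vtheta n θ) = Vtheta n θ ↔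
      ∀ i j, (M i j).re * Real.sin (θ j - θ i) = 0 := by
  have hconj : star (phaseMat θ) * M * phaseMat θ ∈ Matrix.unitaryGroup (Fin n) ℂ :=
    mul_mem (mul_mem (Unitary.star_mem (phaseMat_mem_unitaryGroup θ)) hM)
      (phaseMat_mem_unitaryGroup θ)
  rw [Vtheta_eq_map_phaseMat, map_actL_map_eq_iff (phaseMat_mem_unitaryGroup θ),
    map_actL_V0_eq_iff hconj]
  simp only [conj_phaseMat_apply, Complex.mul_im, hreal, zero_mul, add_zero,
    Complex.exp_ofReal_mul_I_im]

lemma sin_sub_eq_zero_iff_of_mem_Ioo {x y : ℝ} (hx : x ∈ Set.Ioo 0 π) (hy : y ∈ Set.Ioo 0 π) :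
    Real.sin (x - y) = 0 ↔ x = y := by
  rw [Real.sin_eq_zero_iff_of_lt_of_lt (by linarith [hx.1, hy.2]) (by linarith [hx.2, hy.1]),
    sub_eq_zero]

lemma stabilizes_V0_Vtheta_iff {θ : Fin n → ℝ} (hθ : ∀ j, θ j ∈ Set.Ioo 0 π)
    {M : Matrix (Fin n) (Fin n) ℂ} (hM : M ∈ Matrix.unitaryGroup (Fin n) ℂ) :
    (Submodule.map (actL M) (V0 n) = V0 n ∧ Submodule.map (actL M) (Vtheta n θ) = Vtheta n θ) ↔
      (∀ i j, (M i j).im = 0) ∧ ∀ i j, θ i ≠ θ j → M i j = 0 := by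
  rw [map_actL_V0_eq_iff hM]
  refine and_congr_right fun hreal => ?_
  rw [map_actL_Vtheta_eq_iff θ hM hreal]
  refine forall₂_congr fun i j => ?_
  rw [mul_eq_zero, sin_sub_eq_zero_iff_of_mem_Ioo (hθ j) (hθ i), Complex.ext_iff]
  simp [hreal i j, eq_comm, or_iff_not_imp_right]

end

noncomputable def diagBlock (A : Matrix (Fin 2) (Fin 2) ℝ) (c : ℝ) : Matrix (Fin 3) (Fin 3) ℂ :=
  !![(A 0 0 : ℂ), A 0 1, 0; A 1 0, A 1 1, 0; 0, 0, c]

lemma embedO2_eq_diagBlock (A : Matrix (Fin 2) (Fin 2) ℝ) : embedO2 A = diagBlock A A.det := by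
  ext i j
  fin_cases i <;> fin_cases j <;> rfl

lemma diagBlock_mul (A B : Matrix (Fin 2) (Fin 2) ℝ) (c d : ℝ) :
    diagBlock A c * diagBlock B d = diagBlock (A * B) (c * d) := by
  ext i j
  fin_cases i <;> fin_cases j <;>
    simp [diagBlock, Matrix.mul_apply, Fin.sum_univ_succ]

lemma star_diagBlock (A : Matrix (Fin 2) (Fin 2) ℝ) (c : ℝ) :
    star (diagBlock A c) = diagBlock A.transpose c := by
  ext i j
  fin_cases i <;> fin_cases j <;> simp [diagBlock, Matrix.star_apply]

lemma diagBlock_one : diagBlock 1 1 = 1 := by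
  ext i j
  fin_cases i <;> fin_cases j <;> simp [diagBlock]

lemma diagBlock_inj {A B : Matrix (Fin 2) (Fin 2) ℝ} {c d : ℝ} :
    diagBlock A c = diagBlock B d ↔ A = B ∧ c = d := by
  refine ⟨fun h => ⟨?_, ?_⟩, fun ⟨hA, hc⟩ => hA ▸ hc ▸ rfl⟩
  · ext i j
    have := congrFun (congrFun h i.castSucc) j.castSucc
    fin_cases i <;> fin_cases j <;> simpa [diagBlock] using this
  · simpa [diagBlock] using congrFun (congrFun h 2) 2

lemma det_diagBlock (A : Matrix (Fin 2) (Fin 2) ℝ) (c : ℝ) :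
    (diagBlock A c).det = ((A.det * c : ℝ) : ℂ) := by
  simp [diagBlock, Matrix.det_fin_three, Matrix.det_fin_two]
  ring

lemma diagBlock_mem_unitaryGroup_iff {A : Matrix (Fin 2) (Fin 2) ℝ} {c : ℝ} :
    diagBlock A c ∈ Matrix.unitaryGroup (Fin 3) ℂ ↔
      A ∈ Matrix.orthogonalGroup (Fin 2) ℝ ∧ c * c = 1 := by
  rw [Matrix.mem_unitaryGroup_iff, star_diagBlock, diagBlock_mul, ← diagBlock_one, diagBlock_inj,
    Matrix.mem_orthogonalGroup_iff]

lemma exists_eq_diagBlock_iff {θ : Fin 3 → ℝ} (h01 : θ 0 = θ 1) (h12 : θ 1 ≠ θ 2)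
    (M : Matrix (Fin 3) (Fin 3) ℂ) :
    (∃ A c, M = diagBlock A c) ↔ (∀ i j, (M i j).im = 0) ∧ ∀ i j, θ i ≠ θ j → M i j = 0 := by
  constructor
  · rintro ⟨A, c, rfl⟩
    refine ⟨fun i j => ?_, fun i j hij => ?_⟩ <;>
      fin_cases i <;> fin_cases j <;> simp_all [diagBlock]
  · rintro ⟨hreal, hzero⟩
    have hM : ∀ i j, M i j = (M i j).re := fun i j => Complex.ext rfl (by simp [hreal])
    refine ⟨Matrix.of fun i j => (M i.castSucc j.castSucc).re, (M 2 2).re, ?_⟩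
    ext i j
    fin_cases i <;> fin_cases j <;> simp [diagBlock, hzero, h01, h12, h12.symm, ← hM]

lemma exists_eq_embedO2_iff (M : Matrix (Fin 3) (Fin 3) ℂ) :
    (∃ A ∈ Matrix.orthogonalGroup (Fin 2) ℝ, M = embedO2 A) ↔
      (∃ A c, M = diagBlock A c) ∧ M ∈ Matrix.unitaryGroup (Fin 3) ℂ ∧ M.det = 1 := by
  constructor
  · rintro ⟨A, hA, rfl⟩
    have hdet : A.det * A.det = 1 := by
      simpa using congrArg Matrix.det ((Matrix.mem_orthogonalGroup_iff _ _).1 hA)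
    rw [embedO2_eq_diagBlock, diagBlock_mem_unitaryGroup_iff, det_diagBlock]
    exact ⟨⟨A, A.det, rfl⟩, ⟨hA, hdet⟩, by rw [hdet, Complex.ofReal_one]⟩
  · rintro ⟨⟨A, c, rfl⟩, hU, hdet⟩
    rw [diagBlock_mem_unitaryGroup_iff] at hU
    rw [det_diagBlock, Complex.ofReal_eq_one] at hdet
    have hc : c = A.det := by linear_combination A.det * hU.2 - c * hdet
    exact ⟨A, hU.1, by rw [embedO2_eq_diagBlock, hc]⟩

noncomputable def embedO2Hom :
    Matrix.orthogonalGroup (Fin 2) ℝ →* Matrix.unitaryGroup (Fin 3) ℂ where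
  toFun A := ⟨embedO2 A, ((exists_eq_embedO2_iff _).1 ⟨A, A.2, rfl⟩).2.1⟩
  map_one' := Subtype.ext (by simp [embedO2_eq_diagBlock, diagBlock_one])
  map_mul' A B := Subtype.ext (by simp [embedO2_eq_diagBlock, diagBlock_mul])

lemma embedO2Hom_injective : Function.Injective embedO2Hom := fun A B h => by
  have h' := congrArg Subtype.val h
  simp only [embedO2Hom, MonoidHom.coe_mk, OneHom.coe_mk, embedO2_eq_diagBlock,
    diagBlock_inj] at h'
  exact Subtype.ext h'.1

lemma mem_stabSU_iff_s11 {θ : Fin 3 → ℝ} (hθ : ∀ j, θ j ∈ Set.Ioo 0 π) (h01 : θ 0 = θ 1)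
    (h12 : θ 1 ≠ θ 2) (B : Matrix.unitaryGroup (Fin 3) ℂ) :
    B ∈ stabSU θ ↔
      ∃ A ∈ Matrix.orthogonalGroup (Fin 2) ℝ, (B : Matrix (Fin 3) (Fin 3) ℂ) = embedO2 A := by
  change _ ∧ _ ↔ _
  rw [exists_eq_embedO2_iff, exists_eq_diagBlock_iff h01 h12, ← stabilizes_V0_Vtheta_iff hθ B.2]
  have := B.2
  tauto

lemma stabSU_eq_range_embedO2Hom {θ : Fin 3 → ℝ} (hθ : ∀ j, θ j ∈ Set.Ioo 0 π)
    (h01 : θ 0 = θ 1) (h12 : θ 1 ≠ θ 2) : stabSU θ = embedO2Hom.range := by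
  ext B
  rw [mem_stabSU_iff_s11 hθ h01 h12, MonoidHom.mem_range]
  constructor
  · rintro ⟨A, hA, hB⟩
    exact ⟨⟨A, hA⟩, Subtype.ext hB.symm⟩
  · rintro ⟨A, rfl⟩
    exact ⟨A, A.2, rfl⟩

theorem stabilizer_eq_O2_general (θ : Fin 3 → ℝ)
    (hθ : ∀ j, θ j ∈ Set.Ioo (0 : ℝ) π)
    (heq : θ 0 = θ 1) (hne : θ 1 ≠ θ 2) :
    ((stabSU θ : Set (Matrix.unitaryGroup (Fin 3) ℂ)) =
      {B : Matrix.unitaryGroup (Fin 3) ℂ | ∃ A ∈ Matrix.orthogonalGroup (Fin 2) ℝ,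
        (B : Matrix (Fin 3) (Fin 3) ℂ) = embedO2 A}) ∧
    Nonempty (stabSU θ ≃* Matrix.orthogonalGroup (Fin 2) ℝ) :=
  ⟨Set.ext (mem_stabSU_iff_s11 hθ heq hne),
    ⟨(MulEquiv.subgroupCongr (stabSU_eq_range_embedO2Hom hθ heq hne)).trans
      (MonoidHom.ofInjective embedO2Hom_injective).symm⟩⟩

/-- For `θ ∈ (0,π)³` with `Σθ ∈ πℤ` and exactly two angles equal
(`θ₁ = θ₂ ≠ θ₃`), the stabilizer in `SU(3)` of `(V₀, V_θ)` is exactly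
`{diag(A, det A) : A ∈ O(2)}`, a group isomorphic to `O(2)`. -/
theorem stabilizer_eq_O2 (θ : Fin 3 → ℝ)
    (hθ : ∀ j, θ j ∈ Set.Ioo (0 : ℝ) π)
    (hsum : ∃ k : ℤ, (∑ j, θ j) = k * π)
    (heq : θ 0 = θ 1) (hne : θ 1 ≠ θ 2) :
    ((stabSU θ : Set (Matrix.unitaryGroup (Fin 3) ℂ)) =
      {B : Matrix.unitaryGroup (Fin 3) ℂ | ∃ A ∈ Matrix.orthogonalGroup (Fin 2) ℝ,
        (B : Matrix (Fin 3) (Fin 3) ℂ) = embedO2 A}) ∧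
    Nonempty (stabSU θ ≃* Matrix.orthogonalGroup (Fin 2) ℝ) :=
  stabilizer_eq_O2_general θ hθ heq hne
end
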